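/- For a linearly ordered field F, Littlewood's Third Principle (LP3) implies Littlewood's Second Principle (LP2): if for all a ≤ b in F, for every sequence (φ_n) of Lebesgue measurable functions [a,b] → F converging almost everywhere in [a,b] to a function f : [a,b] → F, and every ε ∈ P, there exists a measurable set E ⊆ [a,b] such that the functions φ_n converge uniformly to f on [a,b]∖E, χ_E has a Lebesgue integral, and ∫_a^b χ_E < ε, then for all a ≤ b in F, for every Lebesgue measurable function f : [a,b] → F and every ε ∈ P there exists a measurable set E ⊆ [a,b] such that the restriction of f to [a,b]∖E is continuous, χ_E has a Lebesgue integral, and ∫_a^b χ_E < ε. -/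

import Mathlib

/-!
The positive and negative parts of `f` have decreasing step approximations; their differences
`ψ n` are step functions converging to `f` almost everywhere, so LP3 yields `E` off which
`ψ n → f` uniformly. A step function is continuous away from its partition points, and a uniform
limit of continuous functions is continuous, so `f` is continuous off `E`, the partition points
and the endpoints. If `F` has a positive null sequence, the countably many partition points form
a null set; if not, uniform convergence forces `ψ N = f` off `E` for some `N`, and only the
finitely many partition points of `ψ N` have to be removed. Adding a null set and the endpoints
to `E` changes neither the measurability nor the integral of `χ_E`.
-/

namespace Littlewood

variable {F : Type*} [Field F] [LinearOrder F] [IsStrictOrderedRing F]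

/-- A sequence `s` in `F` converges to `L`. -/
def SeqConv (s : ℕ → F) (L : F) : Prop :=
  ∀ ε : F, 0 < ε → ∃ N : ℕ, ∀ n, N ≤ n → s n - L ∈ Set.Ioo (-ε) ε

/-- `φ` is a step function on `[a,b]`: there is a partition
`a = x 0 < x 1 < ⋯ < x n = b` such that `φ` is constant on each open subinterval. -/
def IsStepOn (a b : F) (φ : F → F) : Prop :=
  ∃ (n : ℕ) (x : ℕ → F), x 0 = a ∧ x n = b ∧ (∀ i < n, x i < x (i + 1)) ∧
    ∀ i < n, ∃ M : F, ∀ t ∈ Set.Ioo (x i) (x (i + 1)), φ t = M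

/-- `I` is the integral of the step function `φ` over `[a,b]`, computed from
an admissible partition `a = x 0 < ⋯ < x n = b` with constant values `M i`. -/
def HasStepIntegral (a b : F) (φ : F → F) (I : F) : Prop :=
  ∃ (n : ℕ) (x : ℕ → F) (M : ℕ → F), x 0 = a ∧ x n = b ∧ (∀ i < n, x i < x (i + 1)) ∧
    (∀ i < n, ∀ t ∈ Set.Ioo (x i) (x (i + 1)), φ t = M i) ∧
    I = ∑ i ∈ Finset.range n, M i * (x (i + 1) - x i)

/-- `S ⊆ [a,b]` has measure zero: for every `ε > 0` there is a countable family of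
open intervals `(c n, d n) ⊆ [a,b]` covering `S` whose partial sums of lengths
converge to a sum less than `ε`. -/
def NullSet (a b : F) (S : Set F) : Prop :=
  ∀ ε : F, 0 < ε → ∃ c d : ℕ → F,
    (∀ n, c n ≤ d n ∧ Set.Ioo (c n) (d n) ⊆ Set.Icc a b) ∧
    S ⊆ (⋃ n, Set.Ioo (c n) (d n)) ∧
    ∃ s : F, s < ε ∧ SeqConv (fun N => ∑ k ∈ Finset.range N, (d k - c k)) s

/-- `Q` holds almost everywhere in `[a,b]`. -/
def AEOn (a b : F) (Q : F → Prop) : Prop :=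
  NullSet a b {x ∈ Set.Icc a b | ¬ Q x}

/-- `φ` is a monotonically decreasing sequence of step functions `[a,b] → P ∪ {0}`
converging to `f` almost everywhere in `[a,b]`. -/
def ApproxSeq (a b : F) (φ : ℕ → F → F) (f : F → F) : Prop :=
  (∀ n, IsStepOn a b (φ n)) ∧
  (∀ n, ∀ x ∈ Set.Icc a b, 0 ≤ φ n x) ∧
  (∀ n, ∀ x ∈ Set.Icc a b, φ (n + 1) x ≤ φ n x) ∧
  AEOn a b fun x => SeqConv (fun n => φ n x) (f x)

/-- A nonnegative-valued function on `[a,b]` is Lebesgue measurable. -/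
def LebMeasurableNN (a b : F) (f : F → F) : Prop :=
  ∃ φ : ℕ → F → F, ApproxSeq a b φ f

/-- A nonnegative-valued function on `[a,b]` has Lebesgue integral `I`:
it is Lebesgue measurable and for every monotonically decreasing sequence of
nonnegative step functions converging to `f` a.e., the sequence of their
(step) integrals converges to `I`. -/
def HasLebIntegralNN (a b : F) (f : F → F) (I : F) : Prop :=
  LebMeasurableNN a b f ∧
    ∀ φ : ℕ → F → F, ApproxSeq a b φ f →
      ∀ J : ℕ → F, (∀ n, HasStepIntegral a b (φ n) (J n)) → SeqConv J I

/-- A function `[a,b] → F` is Lebesgue measurable (via its nonnegative parts). -/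
def LebMeasurable (a b : F) (f : F → F) : Prop :=
  LebMeasurableNN a b (fun x => max (f x) 0) ∧ LebMeasurableNN a b fun x => max (-f x) 0

/-- A function `[a,b] → F` has a Lebesgue integral (via its nonnegative parts). -/
def HasLebIntegral (a b : F) (f : F → F) : Prop :=
  (∃ I : F, HasLebIntegralNN a b (fun x => max (f x) 0) I) ∧
  ∃ I : F, HasLebIntegralNN a b (fun x => max (-f x) 0) I

/-- The characteristic function of `E`. -/
noncomputable def chi (E : Set F) : F → F := E.indicator fun _ => 1

/-- `E ⊆ [a,b]` is a measurable set: its characteristic function is Lebesgue measurable. -/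
def MeasSet (a b : F) (E : Set F) : Prop := LebMeasurableNN a b (chi E)

/-- `E` has Lebesgue measure: `E` has measure zero or `χ_E` has a Lebesgue integral. -/
def HasLebMeasure (a b : F) (E : Set F) : Prop :=
  NullSet a b E ∨ ∃ I : F, HasLebIntegralNN a b (chi E) I

/-- `S` is an interval with endpoints `c ≤ d` (any of the four kinds). -/
def IsIntervalWith (S : Set F) (c d : F) : Prop :=
  S = Set.Icc c d ∨ S = Set.Ico c d ∨ S = Set.Ioc c d ∨ S = Set.Ioo c d

/-- `S` is an interval. -/
def IsInterval (S : Set F) : Prop := ∃ c d : F, IsIntervalWith S c d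

/-- `f` is continuous on `D`. -/
def ContOn (D : Set F) (f : F → F) : Prop :=
  ∀ c ∈ D, ∀ ε : F, 0 < ε → ∃ δ : F, 0 < δ ∧
    ∀ x ∈ D ∩ Set.Ioo (c - δ) (c + δ), f x - f c ∈ Set.Ioo (-ε) ε

/-- The functions `g n` converge uniformly to `f` on `D`. -/
def UnifConvOn (D : Set F) (g : ℕ → F → F) (f : F → F) : Prop :=
  ∀ ε : F, 0 < ε → ∃ N : ℕ, ∀ n, N ≤ n → ∀ x ∈ D, f x - g n x ∈ Set.Ioo (-ε) ε

/-- `A` is a cut of `F`. -/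
def IsCut (A : Set F) : Prop :=
  A.Nonempty ∧ A ≠ Set.univ ∧ ∀ x ∈ A, ∀ y ∉ A, x < y

/-- `c` is a cut point of `A`. -/
def IsCutPoint (A : Set F) (c : F) : Prop :=
  ∀ x ∈ A, ∀ y ∉ A, x ≤ c ∧ c ≤ y

variable (F) in
/-- The Cut Axiom: every cut of `F` has a cut point. -/
def CutAxiom : Prop := ∀ A : Set F, IsCut A → ∃ c : F, IsCutPoint A c

variable (F) in
/-- Lebesgue Integral Property. -/
def LIP : Prop :=
  ∀ a b : F, a ≤ b → ∀ f : F → F, LebMeasurable a b f → HasLebIntegral a b f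

variable (F) in
/-- Lebesgue Measure Property. -/
def LMP : Prop :=
  ∀ a b : F, a ≤ b → ∀ E ⊆ Set.Icc a b, MeasSet a b E → HasLebMeasure a b E

variable (F) in
/-- Littlewood's First Principle. -/
def LP1 : Prop :=
  ∀ a b : F, a ≤ b → ∀ E ⊆ Set.Icc a b, MeasSet a b E → ∀ ε : F, 0 < ε →
    ∃ (m : ℕ) (I : ℕ → Set F), (∀ i < m, IsInterval (I i) ∧ I i ⊆ Set.Icc a b) ∧
      ∃ J : F, HasLebIntegralNN a b
        (chi ((E \ ⋃ i < m, I i) ∪ ((⋃ i < m, I i) \ E))) J ∧ J < ε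

variable (F) in
/-- Littlewood's Second Principle. -/
def LP2 : Prop :=
  ∀ a b : F, a ≤ b → ∀ f : F → F, LebMeasurable a b f → ∀ ε : F, 0 < ε →
    ∃ E ⊆ Set.Icc a b, MeasSet a b E ∧ ContOn (Set.Icc a b \ E) f ∧
      ∃ J : F, HasLebIntegralNN a b (chi E) J ∧ J < ε

variable (F) in
/-- Littlewood's Third Principle. -/
def LP3 : Prop :=
  ∀ a b : F, a ≤ b → ∀ φ : ℕ → F → F, (∀ n, LebMeasurable a b (φ n)) →
    ∀ f : F → F, AEOn a b (fun x => SeqConv (fun n => φ n x) (f x)) →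
    ∀ ε : F, 0 < ε →
      ∃ E ⊆ Set.Icc a b, MeasSet a b E ∧ UnifConvOn (Set.Icc a b \ E) φ f ∧
        ∃ J : F, HasLebIntegralNN a b (chi E) J ∧ J < ε

open Set

section SeqConv

lemma seqConv_of_eventually_eq {s : ℕ → F} {L : F} {N : ℕ} (h : ∀ n, N ≤ n → s n = L) :
    SeqConv s L := fun ε hε => ⟨N, fun n hn => by simp [h n hn, hε]⟩

lemma seqConv_const (L : F) : SeqConv (fun _ => L) L :=
  seqConv_of_eventually_eq (N := 0) fun _ _ => rfl

lemma SeqConv.add {s t : ℕ → F} {L M : F} (hs : SeqConv s L) (ht : SeqConv t M) :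
    SeqConv (fun n => s n + t n) (L + M) := by
  intro ε hε
  obtain ⟨N₁, h₁⟩ := hs (ε / 2) (half_pos hε)
  obtain ⟨N₂, h₂⟩ := ht (ε / 2) (half_pos hε)
  refine ⟨max N₁ N₂, fun n hn => ?_⟩
  have hs' := h₁ n (le_of_max_le_left hn)
  have ht' := h₂ n (le_of_max_le_right hn)
  simp only [mem_Ioo] at hs' ht' ⊢
  constructor <;> linarith

lemma SeqConv.neg {s : ℕ → F} {L : F} (hs : SeqConv s L) : SeqConv (fun n => -s n) (-L) := by
  intro ε hε
  obtain ⟨N, hN⟩ := hs ε hε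
  refine ⟨N, fun n hn => ?_⟩
  have h := hN n hn
  simp only [mem_Ioo] at h ⊢
  constructor <;> linarith

lemma SeqConv.sub {s t : ℕ → F} {L M : F} (hs : SeqConv s L) (ht : SeqConv t M) :
    SeqConv (fun n => s n - t n) (L - M) := by
  simpa only [sub_eq_add_neg] using hs.add ht.neg

end SeqConv

section Interleave

variable {α : Type*}

def interleave (s t : ℕ → α) (k : ℕ) : α := if Even k then s (k / 2) else t (k / 2)

@[simp]
lemma interleave_two_mul (s t : ℕ → α) (n : ℕ) : interleave s t (2 * n) = s n := by
  simp [interleave]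

@[simp]
lemma interleave_two_mul_add_one (s t : ℕ → α) (n : ℕ) : interleave s t (2 * n + 1) = t n := by
  simp [interleave, show (2 * n + 1) / 2 = n by omega]

lemma sum_range_interleave [AddCommMonoid α] (s t : ℕ → α) (n : ℕ) :
    ∑ k ∈ Finset.range n, interleave s t k
      = ∑ k ∈ Finset.range ((n + 1) / 2), s k + ∑ k ∈ Finset.range (n / 2), t k := by
  induction n with
  | zero => simp
  | succ n ih =>
    rw [Finset.sum_range_succ, ih]
    obtain ⟨j, rfl | rfl⟩ := Nat.even_or_odd' n
    · rw [show (2 * j + 1) / 2 = j by omega, show (2 * j + 1 + 1) / 2 = j + 1 by omega,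
        show 2 * j / 2 = j by omega, Finset.sum_range_succ, interleave_two_mul]
      abel
    · rw [show (2 * j + 1 + 1) / 2 = j + 1 by omega, show (2 * j + 1 + 1 + 1) / 2 = j + 1 by omega,
        show (2 * j + 1) / 2 = j by omega, Finset.sum_range_succ t, interleave_two_mul_add_one]
      abel

lemma SeqConv.partialSums_interleave {s t : ℕ → F} {S T : F}
    (hs : SeqConv (fun N => ∑ k ∈ Finset.range N, s k) S)
    (ht : SeqConv (fun N => ∑ k ∈ Finset.range N, t k) T) :
    SeqConv (fun N => ∑ k ∈ Finset.range N, interleave s t k) (S + T) := by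
  simp only [sum_range_interleave]
  refine SeqConv.add (fun ε hε => ?_) (fun ε hε => ?_)
  · obtain ⟨N, hN⟩ := hs ε hε
    exact ⟨2 * N, fun n hn => hN _ (by omega)⟩
  · obtain ⟨N, hN⟩ := ht ε hε
    exact ⟨2 * N, fun n hn => hN _ (by omega)⟩

end Interleave

section NullSet

variable {a b : F}

lemma NullSet.mono {K : Type*} [Field K] [LinearOrder K] {a b : K} {S T : Set K} (hST : S ⊆ T)
    (hT : NullSet a b T) : NullSet a b S := by
  intro ε hε
  obtain ⟨c, d, hcd, hcover, hsum⟩ := hT ε hε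
  exact ⟨c, d, hcd, hST.trans hcover, hsum⟩

lemma nullSet_empty (a b : F) : NullSet a b ∅ := fun ε hε =>
  ⟨fun _ => a, fun _ => a, fun _ => ⟨le_rfl, by simp⟩, empty_subset _, 0, hε,
    seqConv_of_eventually_eq (N := 0) fun _ _ => by simp⟩

lemma NullSet.union {S T : Set F} (hS : NullSet a b S) (hT : NullSet a b T) :
    NullSet a b (S ∪ T) := by
  intro ε hε
  obtain ⟨c₁, d₁, hcd₁, hS₁, s₁, hs₁, hconv₁⟩ := hS (ε / 2) (half_pos hε)
  obtain ⟨c₂, d₂, hcd₂, hT₂, s₂, hs₂, hconv₂⟩ := hT (ε / 2) (half_pos hε)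
  refine ⟨interleave c₁ c₂, interleave d₁ d₂, fun k => ?_, ?_, s₁ + s₂, by linarith, ?_⟩
  · unfold interleave
    split_ifs
    exacts [hcd₁ _, hcd₂ _]
  · rintro x (hx | hx)
    · obtain ⟨n, hn⟩ := mem_iUnion.mp (hS₁ hx)
      exact mem_iUnion.mpr ⟨2 * n, by simpa using hn⟩
    · obtain ⟨n, hn⟩ := mem_iUnion.mp (hT₂ hx)
      exact mem_iUnion.mpr ⟨2 * n + 1, by simpa using hn⟩
  · have hlen : ∀ k, interleave d₁ d₂ k - interleave c₁ c₂ k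
        = interleave (fun n => d₁ n - c₁ n) (fun n => d₂ n - c₂ n) k := by
      intro k
      unfold interleave
      split_ifs <;> rfl
    simpa only [hlen] using hconv₁.partialSums_interleave hconv₂

lemma exists_Ioo_length_mem {x w : F} (hx : x ∈ Ioo a b) (hw : 0 < w) (hwb : w ≤ b - a) :
    ∃ c, Ioo c (c + w) ⊆ Icc a b ∧ x ∈ Ioo c (c + w) := by
  obtain ⟨hax, hxb⟩ := hx
  suffices ∃ c, a ≤ c ∧ c + w ≤ b ∧ c < x ∧ x < c + w by
    obtain ⟨c, hac, hcb, hcx, hxc⟩ := this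
    exact ⟨c, Ioo_subset_Icc_self.trans (Icc_subset_Icc hac hcb), hcx, hxc⟩
  by_cases h₁ : x < a + w / 2
  · exact ⟨a, le_rfl, by linarith, hax, by linarith⟩
  by_cases h₂ : b - w / 2 < x
  · exact ⟨b - w, by linarith, by linarith, by linarith, by linarith⟩
  · exact ⟨x - w / 2, by linarith, by linarith, by linarith, by linarith⟩

lemma nullSet_singleton {x : F} (hx : x ∈ Ioo a b) : NullSet a b {x} := by
  intro ε hε
  set w := min (ε / 2) (b - a)
  have hw : 0 < w := lt_min (half_pos hε) (by linarith [hx.1, hx.2])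
  obtain ⟨c, hsub, hxc⟩ := exists_Ioo_length_mem hx hw (min_le_right _ _)
  have hlen : ∀ k : ℕ, (if k = 0 then c + w else a) - (if k = 0 then c else a)
      = if k = 0 then w else 0 := by
    intro k
    split_ifs <;> ring
  refine ⟨fun k => if k = 0 then c else a, fun k => if k = 0 then c + w else a, fun k => ?_,
    singleton_subset_iff.mpr (mem_iUnion.mpr ⟨0, by simpa using hxc⟩), w,
    (min_le_left _ _).trans_lt (half_lt_self hε),
    seqConv_of_eventually_eq (N := 1) fun n hn => ?_⟩
  · dsimp only
    split_ifs
    exacts [⟨by linarith, hsub⟩, ⟨le_rfl, by simp⟩]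
  · simp [hlen, Finset.sum_ite_eq', show 0 < n by omega]

lemma nullSet_of_finite {S : Set F} (hS : S.Finite) (hSab : S ⊆ Ioo a b) : NullSet a b S := by
  refine Set.Finite.induction_on (motive := fun S _ => S ⊆ Ioo a b → NullSet a b S) S hS
    (fun _ => nullSet_empty a b) (fun {x s} _ _ ih hsub => ?_) hSab
  rw [insert_eq]
  exact (nullSet_singleton (hsub (mem_insert x s))).union (ih ((subset_insert x s).trans hsub))

def shrinkingSeq (δ : F) (u : ℕ → F) : ℕ → F
  | 0 => δ
  | k + 1 => min (shrinkingSeq δ u k) (u k) / 2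

/-- Without completeness a bounded increasing sequence need not converge, so the lengths are
chosen to telescope: `∑_{k<N} w k = δ - v N` with `v` decreasing to `0` below the null sequence. -/
lemma exists_pos_seq_partialSums_seqConv {u : ℕ → F} (hu : ∀ k, 0 < u k) (hu0 : SeqConv u 0)
    {δ : F} (hδ : 0 < δ) :
    ∃ w : ℕ → F, (∀ j, 0 < w j ∧ w j ≤ δ) ∧ SeqConv (fun N => ∑ k ∈ Finset.range N, w k) δ := by
  set v := shrinkingSeq δ u
  have hv_zero : v 0 = δ := rfl
  have hv_succ : ∀ k, v (k + 1) = min (v k) (u k) / 2 := fun _ => rfl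
  have hv_pos : ∀ k, 0 < v k := by
    intro k
    induction k with
    | zero => exact hδ
    | succ k ih => rw [hv_succ]; exact half_pos (lt_min ih (hu k))
  have hv_lt : ∀ k, v (k + 1) < v k := fun k => by
    rw [hv_succ]; linarith [min_le_left (v k) (u k), hv_pos k]
  have hv_anti : Antitone v := antitone_nat_of_succ_le fun k => (hv_lt k).le
  have hv_null : SeqConv v 0 := by
    intro ε hε
    obtain ⟨N, hN⟩ := hu0 ε hε
    refine ⟨N + 1, fun n hn => ?_⟩
    obtain ⟨k, rfl⟩ : ∃ k, n = k + 1 := ⟨n - 1, by omega⟩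
    have huk := hN k (by omega)
    simp only [sub_zero, mem_Ioo] at huk ⊢
    rw [hv_succ]
    constructor <;> linarith [min_le_right (v k) (u k), hv_pos (k + 1), hv_succ k]
  refine ⟨fun j => v j - v (j + 1), fun j => ⟨sub_pos.2 (hv_lt j), ?_⟩, ?_⟩
  · linarith [hv_anti (Nat.zero_le j), hv_pos (j + 1)]
  · have hsum : ∀ N, ∑ k ∈ Finset.range N, (v k - v (k + 1)) = δ - v N := fun N => by
      rw [Finset.sum_range_sub', hv_zero]
    simpa only [hsum, sub_zero] using (seqConv_const δ).sub hv_null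

lemma nullSet_of_countable {u : ℕ → F} (hu : ∀ k, 0 < u k) (hu0 : SeqConv u 0) {S : Set F}
    (hS : S.Countable) (hSab : S ⊆ Ioo a b) : NullSet a b S := by
  rcases S.eq_empty_or_nonempty with rfl | hne
  · exact nullSet_empty a b
  obtain ⟨q, rfl⟩ := hS.exists_eq_range hne
  have hab : a < b := by obtain ⟨x, hx⟩ := hne; exact (hSab hx).1.trans (hSab hx).2
  intro ε hε
  obtain ⟨δ, hδ, hδε, hδb⟩ : ∃ δ, 0 < δ ∧ δ < ε ∧ δ ≤ b - a := by
    have h := lt_min hε (sub_pos.2 hab)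
    exact ⟨min ε (b - a) / 2, half_pos h, by linarith [min_le_left ε (b - a)],
      by linarith [min_le_right ε (b - a)]⟩
  obtain ⟨w, hw, hconv⟩ := exists_pos_seq_partialSums_seqConv hu hu0 hδ
  have hwb : ∀ j, w j ≤ b - a := fun j => (hw j).2.trans hδb
  choose c hc using fun j => exists_Ioo_length_mem (hSab (mem_range_self j)) (hw j).1 (hwb j)
  refine ⟨c, fun j => c j + w j, fun j => ⟨by linarith [(hw j).1], (hc j).1⟩, ?_, δ, ?_, ?_⟩
  · rintro _ ⟨j, rfl⟩
    exact mem_iUnion.mpr ⟨j, (hc j).2⟩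
  · exact hδε
  · simpa using hconv

end NullSet

section StepFunction

variable {α : Type*} [LinearOrder α] {a b : α} {p : ℕ → α} {m : ℕ}

lemma exists_mem_Ioo_partition {c : α} (h0 : p 0 = a) (hm : p m = b) (hc : c ∈ Ioo a b)
    (hnot : ∀ i ≤ m, p i ≠ c) : ∃ i < m, c ∈ Ioo (p i) (p (i + 1)) := by
  induction m generalizing b with
  | zero => exact absurd (hc.1.trans hc.2) (by rw [← h0, hm]; exact lt_irrefl b)
  | succ m ih =>
    rcases lt_or_gt_of_ne (hnot m (by omega)) with h | h
    · exact ⟨m, by omega, h, hm ▸ hc.2⟩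
    · obtain ⟨i, hi, hci⟩ := ih rfl ⟨hc.1, h⟩ fun i hi => hnot i (by omega)
      exact ⟨i, by omega, hci⟩

lemma exists_Ioo_subset_Ioo_partition [DenselyOrdered α] {u v : α} (h0 : p 0 = a) (hm : p m = b)
    (hau : a ≤ u) (huv : u < v) (hvb : v ≤ b) (havoid : ∀ i ≤ m, p i ∉ Ioo u v) :
    ∃ i < m, Ioo u v ⊆ Ioo (p i) (p (i + 1)) := by
  obtain ⟨c, huc, hcv⟩ := exists_between huv
  obtain ⟨i, hi, hci⟩ := exists_mem_Ioo_partition h0 hm ⟨hau.trans_lt huc, hcv.trans_le hvb⟩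
    fun i hi h => havoid i hi (h ▸ ⟨huc, hcv⟩)
  refine ⟨i, hi, Ioo_subset_Ioo (not_lt.1 fun h => havoid i hi.le ⟨h, hci.1.trans hcv⟩)
    (not_lt.1 fun h => havoid (i + 1) hi ⟨huc.trans hci.2, h⟩)⟩

lemma mem_Icc_of_partition (h0 : p 0 = a) (hm : p m = b) (hmono : ∀ i < m, p i < p (i + 1))
    {i : ℕ} (hi : i ≤ m) : p i ∈ Icc a b := by
  have hp : MonotoneOn p (Iic m) := (strictMonoOn_Iic_of_lt_succ fun k hk => hmono k hk).monotoneOn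
  exact ⟨h0 ▸ hp (by simp) hi (Nat.zero_le i), hm ▸ hp hi (by simp) hi⟩

lemma Ioo_subset_Ioo_of_partition (h0 : p 0 = a) (hm : p m = b)
    (hmono : ∀ i < m, p i < p (i + 1)) {i : ℕ} (hi : i < m) :
    Ioo (p i) (p (i + 1)) ⊆ Ioo a b :=
  Ioo_subset_Ioo (mem_Icc_of_partition h0 hm hmono hi.le).1
    (mem_Icc_of_partition h0 hm hmono (Nat.succ_le_of_lt hi)).2

lemma IsStepOn.congr {φ ψ : α → α} (hφ : IsStepOn a b φ) (hφψ : EqOn φ ψ (Ioo a b)) :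
    IsStepOn a b ψ := by
  obtain ⟨m, p, h0, hm, hmono, hconst⟩ := hφ
  refine ⟨m, p, h0, hm, hmono, fun i hi => ?_⟩
  obtain ⟨M, hM⟩ := hconst i hi
  exact ⟨M, fun t ht => (hφψ (Ioo_subset_Ioo_of_partition h0 hm hmono hi ht)).symm.trans (hM t ht)⟩

lemma IsStepOn.comp {φ : α → α} (hφ : IsStepOn a b φ) (g : α → α) :
    IsStepOn a b (g ∘ φ) := by
  obtain ⟨m, p, h0, hm, hmono, hconst⟩ := hφ
  refine ⟨m, p, h0, hm, hmono, fun i hi => ?_⟩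
  obtain ⟨M, hM⟩ := hconst i hi
  exact ⟨g M, fun t ht => congrArg g (hM t ht)⟩

lemma isStepOn_of_finset {φ : α → α} (T : Finset α) (ha : a ∈ T) (hb : b ∈ T)
    (hT : ∀ t ∈ T, t ∈ Icc a b)
    (hconst : ∀ u ∈ T, ∀ v ∈ T, u < v → (∀ t ∈ T, t ∉ Ioo u v) →
      ∃ M, ∀ x ∈ Ioo u v, φ x = M) :
    IsStepOn a b φ := by
  obtain ⟨n, hn⟩ : ∃ n, T.card = n + 1 := ⟨T.card - 1, by have := T.card_pos.2 ⟨a, ha⟩; omega⟩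
  set e := T.orderEmbOfFin hn
  have he_min : e ⟨0, n.succ_pos⟩ = a := by
    rw [Finset.orderEmbOfFin_zero hn n.succ_pos]
    exact le_antisymm (T.min'_le a ha) (hT _ (T.min'_mem _)).1
  have he_max : e ⟨n, n.lt_succ_self⟩ = b := by
    rw [show (⟨n, n.lt_succ_self⟩ : Fin (n + 1)) = ⟨n + 1 - 1, by omega⟩ from rfl,
      Finset.orderEmbOfFin_last hn n.succ_pos]
    exact le_antisymm (hT _ (T.max'_mem _)).2 (T.le_max' b hb)
  refine ⟨n, fun i => e ⟨min i n, by omega⟩, by simpa using he_min, by simpa using he_max,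
    fun i hi => e.strictMono (by simp [Fin.lt_def]; omega), fun i hi => ?_⟩
  refine hconst _ (T.orderEmbOfFin_mem hn _) _ (T.orderEmbOfFin_mem hn _)
    (e.strictMono (by simp [Fin.lt_def]; omega)) fun t ht hmem => ?_
  obtain ⟨j, rfl⟩ : t ∈ Set.range e := by rw [Finset.range_orderEmbOfFin]; exact ht
  have h₁ := e.lt_iff_lt.1 hmem.1
  have h₂ := e.lt_iff_lt.1 hmem.2
  simp only [Fin.lt_def] at h₁ h₂
  omega

/-- Common refinement: the union of the two partitions is a partition for both functions. -/
lemma IsStepOn.comp₂ [DenselyOrdered α] {φ ψ : α → α} (hφ : IsStepOn a b φ)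
    (hψ : IsStepOn a b ψ) (g : α → α → α) : IsStepOn a b fun x => g (φ x) (ψ x) := by
  classical
  obtain ⟨m, p, hp0, hpm, hpmono, hpconst⟩ := hφ
  obtain ⟨l, q, hq0, hql, hqmono, hqconst⟩ := hψ
  set T := (Finset.range (m + 1)).image p ∪ (Finset.range (l + 1)).image q
  have hpT : ∀ i ≤ m, p i ∈ T := fun i hi =>
    Finset.mem_union_left _ (Finset.mem_image_of_mem p (Finset.mem_range.2 (by omega)))
  have hqT : ∀ i ≤ l, q i ∈ T := fun i hi =>
    Finset.mem_union_right _ (Finset.mem_image_of_mem q (Finset.mem_range.2 (by omega)))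
  have hT : ∀ t ∈ T, t ∈ Icc a b := by
    intro t ht
    simp only [T, Finset.mem_union, Finset.mem_image, Finset.mem_range] at ht
    rcases ht with ⟨i, hi, rfl⟩ | ⟨i, hi, rfl⟩
    exacts [mem_Icc_of_partition hp0 hpm hpmono (by omega),
      mem_Icc_of_partition hq0 hql hqmono (by omega)]
  refine isStepOn_of_finset T (hp0 ▸ hpT 0 (Nat.zero_le m)) (hpm ▸ hpT m le_rfl) hT
    fun u hu v hv huv havoid => ?_
  obtain ⟨i, hi, hpi⟩ := exists_Ioo_subset_Ioo_partition hp0 hpm (hT u hu).1 huv (hT v hv).2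
    fun i hi => havoid (p i) (hpT i hi)
  obtain ⟨j, hj, hqj⟩ := exists_Ioo_subset_Ioo_partition hq0 hql (hT u hu).1 huv (hT v hv).2
    fun j hj => havoid (q j) (hqT j hj)
  obtain ⟨M, hM⟩ := hpconst i hi
  obtain ⟨N, hN⟩ := hqconst j hj
  exact ⟨g M N, fun x hx => by rw [hM x (hpi hx), hN x (hqj hx)]⟩

end StepFunction

lemma HasStepIntegral.congr {K : Type*} [Field K] [LinearOrder K] {a b I : K} {φ ψ : K → K}
    (h : HasStepIntegral a b φ I) (hφψ : EqOn φ ψ (Ioo a b)) : HasStepIntegral a b ψ I := by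
  obtain ⟨m, p, M, h0, hm, hmono, hconst, hI⟩ := h
  exact ⟨m, p, M, h0, hm, hmono, fun i hi t ht =>
    (hφψ (Ioo_subset_Ioo_of_partition h0 hm hmono hi ht)).symm.trans (hconst i hi t ht), hI⟩

section Measurability

variable {a b : F}

lemma approxSeq_const {g : F → F} (hg : IsStepOn a b g) (hg0 : ∀ x ∈ Icc a b, 0 ≤ g x) :
    ApproxSeq a b (fun _ => g) g :=
  ⟨fun _ => hg, fun _ => hg0, fun _ _ _ => le_rfl,
    (nullSet_empty a b).mono fun _ hx => hx.2 (seqConv_const _)⟩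

lemma IsStepOn.lebMeasurable {φ : F → F} (hφ : IsStepOn a b φ) : LebMeasurable a b φ :=
  ⟨⟨_, approxSeq_const (hφ.comp fun y => max y 0) fun _ _ => le_max_right _ _⟩,
    ⟨_, approxSeq_const (hφ.comp fun y => max (-y) 0) fun _ _ => le_max_right _ _⟩⟩

lemma LebMeasurable.exists_isStepOn_seqConv {f : F → F} (hf : LebMeasurable a b f) :
    ∃ ψ : ℕ → F → F, (∀ n, IsStepOn a b (ψ n)) ∧
      AEOn a b fun x => SeqConv (fun n => ψ n x) (f x) := by
  obtain ⟨⟨φ, hφ⟩, ⟨φ', hφ'⟩⟩ := hf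
  refine ⟨fun n x => φ n x - φ' n x, fun n => (hφ.1 n).comp₂ (hφ'.1 n) (· - ·),
    (hφ.2.2.2.union hφ'.2.2.2).mono ?_⟩
  rintro x ⟨hx, hconv⟩
  by_contra hbad
  simp only [mem_union, mem_ofPred_eq, not_or, not_and, not_not] at hbad
  exact hconv (by
    simpa only [max_zero_sub_max_neg_zero_eq_self] using (hbad.1 hx).sub (hbad.2 hx))

/-- Step functions are unconstrained at the endpoints, so the sequence may be redefined there. -/
lemma ApproxSeq.congr {φ : ℕ → F → F} {f g : F → F} {D : Set F} (h : ApproxSeq a b φ f)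
    (hD : NullSet a b D) (hfg : EqOn f g (Ioo a b \ D)) (hga : 0 ≤ g a) (hgb : 0 ≤ g b) :
    ApproxSeq a b (fun n x => if x = a ∨ x = b then g x else φ n x) g := by
  obtain ⟨hstep, hnn, hdec, hae⟩ := h
  have hint : ∀ x ∈ Ioo a b, ¬(x = a ∨ x = b) := fun x hx h =>
    h.elim hx.1.ne' hx.2.ne
  refine ⟨fun n => (hstep n).congr fun x hx => (if_neg (hint x hx)).symm, fun n x hx => ?_,
    fun n x hx => ?_, (hae.union hD).mono ?_⟩
  · dsimp only
    split_ifs with h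
    · rcases h with rfl | rfl
      exacts [hga, hgb]
    · exact hnn n x hx
  · dsimp only
    split_ifs
    exacts [le_rfl, hdec n x hx]
  · rintro x ⟨hx, hconv⟩
    by_cases hend : x = a ∨ x = b
    · exact absurd (seqConv_of_eventually_eq (N := 0) fun n _ => if_pos hend) hconv
    have hxI : x ∈ Ioo a b := ⟨lt_of_le_of_ne hx.1 (Ne.symm fun h => hend (Or.inl h)),
      lt_of_le_of_ne hx.2 fun h => hend (Or.inr h)⟩
    by_cases hxD : x ∈ D
    · exact Or.inr hxD
    · refine Or.inl ⟨hx, fun h => hconv ?_⟩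
      simpa only [if_neg hend, hfg ⟨hxI, hxD⟩] using h

lemma LebMeasurableNN.congr {f g : F → F} {D : Set F} (h : LebMeasurableNN a b f)
    (hD : NullSet a b D) (hfg : EqOn f g (Ioo a b \ D)) (hga : 0 ≤ g a) (hgb : 0 ≤ g b) :
    LebMeasurableNN a b g :=
  let ⟨_, hφ⟩ := h
  ⟨_, hφ.congr hD hfg hga hgb⟩

lemma HasLebIntegralNN.congr {f g : F → F} {D : Set F} {J : F} (h : HasLebIntegralNN a b f J)
    (hD : NullSet a b D) (hfg : EqOn f g (Ioo a b \ D)) (hfa : 0 ≤ f a) (hfb : 0 ≤ f b)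
    (hga : 0 ≤ g a) (hgb : 0 ≤ g b) : HasLebIntegralNN a b g J := by
  refine ⟨h.1.congr hD hfg hga hgb, fun κ hκ I hI => h.2 _ (hκ.congr hD hfg.symm hfa hfb) I
    fun n => (hI n).congr fun x hx => ?_⟩
  exact (if_neg fun h => h.elim hx.1.ne' hx.2.ne).symm

lemma chi_nonneg (E : Set F) (x : F) : 0 ≤ chi E x :=
  Set.indicator_nonneg (fun _ _ => zero_le_one) x

end Measurability

section Continuity

lemma ContOn.mono {K : Type*} [Field K] [LinearOrder K] {D D' : Set K} {f : K → K}
    (h : ContOn D f) (hD : D' ⊆ D) : ContOn D' f := by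
  intro c hc ε hε
  obtain ⟨δ, hδ, hcont⟩ := h c (hD hc) ε hε
  exact ⟨δ, hδ, fun x hx => hcont x ⟨hD hx.1, hx.2⟩⟩

lemma ContOn.congr {K : Type*} [Field K] [LinearOrder K] {D : Set K} {f g : K → K}
    (h : ContOn D f) (hfg : EqOn f g D) : ContOn D g := by
  intro c hc ε hε
  obtain ⟨δ, hδ, hcont⟩ := h c hc ε hε
  exact ⟨δ, hδ, fun x hx => hfg hx.1 ▸ hfg hc ▸ hcont x hx⟩

lemma UnifConvOn.mono {K : Type*} [Field K] [LinearOrder K] {D D' : Set K} {g : ℕ → K → K}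
    {f : K → K} (h : UnifConvOn D g f) (hD : D' ⊆ D) : UnifConvOn D' g f := by
  intro ε hε
  obtain ⟨N, hN⟩ := h ε hε
  exact ⟨N, fun n hn x hx => hN n hn x (hD hx)⟩

variable {D : Set F}

lemma ContOn.of_unifConvOn {g : ℕ → F → F} {f : F → F} (hg : ∀ n, ContOn D (g n))
    (hunif : UnifConvOn D g f) : ContOn D f := by
  intro c hc ε hε
  obtain ⟨N, hN⟩ := hunif (ε / 3) (by positivity)
  obtain ⟨δ, hδ, hcont⟩ := hg N c hc (ε / 3) (by positivity)
  refine ⟨δ, hδ, fun x hx => ?_⟩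
  have h₁ := hN N le_rfl x hx.1
  have h₂ := hN N le_rfl c hc
  have h₃ := hcont x hx
  simp only [mem_Ioo] at h₁ h₂ h₃ ⊢
  constructor <;> linarith

lemma contOn_of_partition {a b : F} {φ : F → F} {m : ℕ} {p : ℕ → F} (h0 : p 0 = a)
    (hm : p m = b) (hconst : ∀ i < m, ∃ M, ∀ t ∈ Ioo (p i) (p (i + 1)), φ t = M) :
    ContOn (Ioo a b \ p '' Iic m) φ := by
  rintro c ⟨hc, hcp⟩ ε hε
  obtain ⟨i, hi, hci⟩ := exists_mem_Ioo_partition h0 hm hc fun i hi h => hcp ⟨i, hi, h⟩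
  obtain ⟨M, hM⟩ := hconst i hi
  refine ⟨min (c - p i) (p (i + 1) - c), lt_min (sub_pos.2 hci.1) (sub_pos.2 hci.2),
    fun x ⟨_, hx⟩ => ?_⟩
  have hxi : x ∈ Ioo (p i) (p (i + 1)) := by
    constructor <;> linarith [hx.1, hx.2, min_le_left (c - p i) (p (i + 1) - c),
      min_le_right (c - p i) (p (i + 1) - c)]
  simp [hM x hxi, hM c hci, hε]

/-- Otherwise the errors at points of disagreement would form a positive null sequence. -/
lemma UnifConvOn.exists_eqOn {g : ℕ → F → F} {f : F → F} (h : UnifConvOn D g f)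
    (hno : ¬∃ u : ℕ → F, (∀ k, 0 < u k) ∧ SeqConv u 0) : ∃ N, EqOn (g N) f D := by
  by_contra hne
  simp only [EqOn, not_exists, not_forall] at hne
  choose x hxD hx using hne
  refine hno ⟨fun k => |f (x k) - g k (x k)|, fun k => abs_pos.2 (sub_ne_zero.2 (Ne.symm (hx k))),
    fun ε hε => ?_⟩
  obtain ⟨N, hN⟩ := h ε hε
  refine ⟨N, fun n hn => ?_⟩
  have hn' := hN n hn (x n) (hxD n)
  simp only [mem_Ioo, sub_zero] at hn' ⊢
  exact ⟨(neg_neg_of_pos hε).trans_le (abs_nonneg _), abs_lt.2 hn'⟩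

end Continuity

lemma exists_nullSet_contOn {a b : F} {D : Set F} {ψ : ℕ → F → F} {f : F → F}
    (hψ : ∀ n, IsStepOn a b (ψ n)) (hunif : UnifConvOn D ψ f) :
    ∃ B ⊆ Ioo a b, NullSet a b B ∧ ContOn ((D ∩ Ioo a b) \ B) f := by
  choose m p h0 hm _ hconst using hψ
  have hcont : ∀ n, ContOn (Ioo a b \ p n '' Iic (m n)) (ψ n) := fun n =>
    contOn_of_partition (h0 n) (hm n) (hconst n)
  have hfin : ∀ n, (p n '' Iic (m n)).Finite := fun n => (finite_Iic _).image _
  by_cases hnull : ∃ u : ℕ → F, (∀ k, 0 < u k) ∧ SeqConv u 0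
  · obtain ⟨u, hu, hu0⟩ := hnull
    refine ⟨(⋃ n, p n '' Iic (m n)) ∩ Ioo a b, inter_subset_right,
      nullSet_of_countable hu hu0 ((countable_iUnion fun n => (hfin n).countable).mono
        inter_subset_left) inter_subset_right,
      ContOn.of_unifConvOn (fun n => (hcont n).mono ?_) (hunif.mono fun x hx => hx.1.1)⟩
    rintro x ⟨⟨_, hx⟩, hxB⟩
    exact ⟨hx, fun h => hxB ⟨mem_iUnion.2 ⟨n, h⟩, hx⟩⟩
  · obtain ⟨N, hN⟩ := hunif.exists_eqOn hnull
    refine ⟨p N '' Iic (m N) ∩ Ioo a b, inter_subset_right,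
      nullSet_of_finite ((hfin N).subset inter_subset_left) inter_subset_right,
      ((hcont N).mono ?_).congr (hN.mono fun x hx => hx.1.1)⟩
    rintro x ⟨⟨_, hx⟩, hxB⟩
    exact ⟨hx, fun h => hxB ⟨h, hx⟩⟩

theorem littlewoodThird_implies_littlewoodSecond (F : Type*) [Field F] [LinearOrder F] [IsStrictOrderedRing F]
    (hLP3 : ∀ a b : F, a ≤ b → ∀ φ : ℕ → F → F, (∀ n, LebMeasurable a b (φ n)) →
      ∀ f : F → F, AEOn a b (fun x => SeqConv (fun n => φ n x) (f x)) →
      ∀ ε : F, 0 < ε →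
        ∃ E ⊆ Set.Icc a b, MeasSet a b E ∧ UnifConvOn (Set.Icc a b \ E) φ f ∧
          ∃ J : F, HasLebIntegralNN a b (chi E) J ∧ J < ε) :
    ∀ a b : F, a ≤ b → ∀ f : F → F, LebMeasurable a b f → ∀ ε : F, 0 < ε →
      ∃ E ⊆ Set.Icc a b, MeasSet a b E ∧ ContOn (Set.Icc a b \ E) f ∧
        ∃ J : F, HasLebIntegralNN a b (chi E) J ∧ J < ε := by
  intro a b hab f hf ε hε
  obtain ⟨ψ, hψ, hae⟩ := hf.exists_isStepOn_seqConv
  obtain ⟨E, hE, hEmeas, hunif, J, hJ, hJε⟩ :=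
    hLP3 a b hab ψ (fun n => (hψ n).lebMeasurable) f hae ε hε
  obtain ⟨B, hBab, hB, hcont⟩ := exists_nullSet_contOn hψ hunif
  have hchi : EqOn (chi E) (chi (E ∪ B ∪ {a, b})) (Ioo a b \ B) := by
    rintro x ⟨hx, hxB⟩
    by_cases hxE : x ∈ E <;> simp [chi, hxE, hxB, hx.1.ne', hx.2.ne]
  refine ⟨E ∪ B ∪ {a, b}, union_subset (union_subset hE (hBab.trans Ioo_subset_Icc_self))
      (insert_subset_iff.2 ⟨left_mem_Icc.2 hab, singleton_subset_iff.2 (right_mem_Icc.2 hab)⟩),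
    LebMeasurableNN.congr hEmeas hB hchi (chi_nonneg _ a) (chi_nonneg _ b),
    hcont.mono ?_, J, hJ.congr hB hchi (chi_nonneg _ a) (chi_nonneg _ b) (chi_nonneg _ a)
      (chi_nonneg _ b), hJε⟩
  rintro x ⟨hx, hxE⟩
  simp only [mem_union, mem_insert_iff, mem_singleton_iff, not_or] at hxE
  exact ⟨⟨⟨hx, hxE.1.1⟩, lt_of_le_of_ne hx.1 (Ne.symm hxE.2.1), lt_of_le_of_ne hx.2 hxE.2.2⟩,
    hxE.1.2⟩

end Littlewood
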